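/- Let Λ = ℚ[p_1, p_2, …] be the polynomial ring over ℚ in countably many variables p_k indexed by positive integers. Define h_m ∈ Λ by h_0 = 1 and m·h_m = Σ_{i=1}^m p_i·h_{m−i} for m ≥ 1, and let D_1 be the unique ℚ-linear derivation of Λ with D_1(p_k) = k for all k ≥ 1. Then for every k ≥ 1 and every m ≥ 0, the k-fold iterate satisfies D_1^k(h_m) = Σ_{j=0}^{m−k} C(m−1−j, k−1)·h_j, where C(·,·) denotes the binomial coefficient and the sum is empty if k > m. -/

import Mathlib

/-!
Write `S` for the partial-sum operator `(S a)_m = a_0 + ⋯ + a_{m-1}`. Differentiating the Newton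
recurrence and using it once more for each `h_n` shows, by strong induction on `m`, that
`D_1 h_m = (S h)_m`. Since `D_1` is linear this iterates to `D_1^k h_m = (S^k h)_m`, and
Pascal's rule gives `(S^{k+1} a)_m = Σ_{j<m} C(m-1-j, k) a_j` for any sequence `a`.
-/

open MvPolynomial Finset

/-- The derivation `D_1` of `Λ = ℚ[p_1, p_2, …]` with `D_1(p_k) = k` for all `k ≥ 1`. -/
noncomputable def D1 : Derivation ℚ (MvPolynomial ℕ+ ℚ) (MvPolynomial ℕ+ ℚ) :=
  mkDerivation ℚ fun k : ℕ+ => C (((k : ℕ) : ℚ))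

section PartialSum

variable {M : Type*} [AddCommMonoid M]

def partialSum (a : ℕ → M) (m : ℕ) : M :=
  ∑ j ∈ range m, a j

theorem partialSum_zero (a : ℕ → M) : partialSum a 0 = 0 :=
  sum_range_zero a

theorem partialSum_succ (a : ℕ → M) (m : ℕ) : partialSum a (m + 1) = partialSum a m + a m :=
  sum_range_succ a m

theorem iterate_partialSum_succ_apply (a : ℕ → M) (k m : ℕ) :
    partialSum^[k + 1] a m = ∑ j ∈ range m, (m - 1 - j).choose k • a j := by
  induction k generalizing m with
  | zero => simp [partialSum]
  | succ k ihk =>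
    induction m with
    | zero => simp [Function.iterate_succ_apply', partialSum_zero]
    | succ m ihm =>
      rw [Function.iterate_succ_apply', partialSum_succ, ← Function.iterate_succ_apply' partialSum,
        ihm, ihk, ← sum_add_distrib, sum_range_succ, Nat.add_sub_cancel, Nat.sub_self,
        Nat.choose_zero_succ, zero_smul, add_zero]
      refine sum_congr rfl fun j hj => ?_
      have hjm : m - j = m - 1 - j + 1 := by grind
      rw [← add_smul, add_comm, hjm, Nat.choose_succ_succ']

theorem sum_range_choose_smul_eq_sum_range_sub (a : ℕ → M) (k m : ℕ) :
    ∑ j ∈ range m, (m - 1 - j).choose k • a j =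
      ∑ j ∈ range (m - k), (m - 1 - j).choose k • a j := by
  refine (sum_subset (range_subset_range.2 (Nat.sub_le m k)) fun j _ hj => ?_).symm
  rw [Nat.choose_eq_zero_of_lt (by grind), zero_smul]

theorem Module.End.pow_apply_eq_iterate_partialSum {R : Type*} [Semiring R] [Module R M]
    (L : Module.End R M) (a : ℕ → M) (h : ∀ m, L (a m) = partialSum a m) (k m : ℕ) :
    (L ^ k) (a m) = partialSum^[k] a m := by
  induction k generalizing m with
  | zero => rfl
  | succ k ih =>
    rw [pow_succ, Module.End.mul_apply, h, partialSum, map_sum, Function.iterate_succ_apply']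
    exact sum_congr rfl fun j _ => ih j

end PartialSum

section Newton

variable {A : Type*} [CommRing A] [Algebra ℚ A] {p H : ℕ → A}

theorem sum_mul_partialSum_eq_sum_smul
    (Hrec : ∀ m : ℕ, 1 ≤ m → (m : ℚ) • H m = ∑ i ∈ range m, p i * H (m - (i + 1))) (m : ℕ) :
    ∑ i ∈ range m, p i * partialSum H (m - (i + 1)) = ∑ n ∈ range m, (n : ℚ) • H n := by
  cases m with
  | zero => simp
  | succ m =>
    calc ∑ i ∈ range (m + 1), p i * partialSum H (m + 1 - (i + 1))
        = ∑ i ∈ range m, ∑ j ∈ range (m - i), p i * H j := by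
          simp [sum_range_succ, partialSum, mul_sum]
      _ = ∑ n ∈ range m, ∑ i ∈ range (n + 1), p i * H (n - i) :=
          (sum_range_diag_flip m fun i j => p i * H j).symm
      _ = ∑ n ∈ range (m + 1), (n : ℚ) • H n := by
          rw [sum_range_succ', Nat.cast_zero, zero_smul, add_zero]
          refine sum_congr rfl fun n _ => ?_
          rw [Hrec (n + 1) (Nat.le_add_left 1 n)]
          simp only [Nat.add_sub_add_right]

theorem Derivation.apply_eq_partialSum_of_newton (D : Derivation ℚ A A)
    (hDp : ∀ i, D (p i) = algebraMap ℚ A (i + 1)) (H0 : H 0 = 1)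
    (Hrec : ∀ m : ℕ, 1 ≤ m → (m : ℚ) • H m = ∑ i ∈ range m, p i * H (m - (i + 1))) (m : ℕ) :
    D (H m) = partialSum H m := by
  induction m using Nat.strong_induction_on with
  | _ m ih =>
    rcases m.eq_zero_or_pos with rfl | hm
    · simp [H0, partialSum_zero]
    refine smul_right_injective A (Nat.cast_ne_zero.2 hm.ne' : (m : ℚ) ≠ 0) ?_
    calc (m : ℚ) • D (H m) = D ((m : ℚ) • H m) := (D.map_smul _ _).symm
      _ = ∑ i ∈ range m,
            (p i * partialSum H (m - (i + 1)) + ((i + 1 : ℕ) : ℚ) • H (m - (i + 1))) := by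
          rw [Hrec m hm, map_sum]
          refine sum_congr rfl fun i hi => ?_
          rw [D.leibniz, hDp, ih _ (by grind), smul_eq_mul, smul_eq_mul, Algebra.smul_def]
          push_cast
          ring
      _ = ∑ n ∈ range m, (n : ℚ) • H n + ∑ j ∈ range m, ((m - j : ℕ) : ℚ) • H j := by
          rw [sum_add_distrib, sum_mul_partialSum_eq_sum_smul Hrec,
            ← sum_range_reflect (fun j => ((m - j : ℕ) : ℚ) • H j)]
          congr 1
          refine sum_congr rfl fun i hi => ?_
          rw [show m - (m - 1 - i) = i + 1 by grind, show m - (i + 1) = m - 1 - i by grind]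
      _ = (m : ℚ) • partialSum H m := by
          rw [partialSum, smul_sum, ← sum_add_distrib]
          refine sum_congr rfl fun j hj => ?_
          rw [← add_smul, Nat.cast_sub (by grind), add_sub_cancel]

end Newton

theorem D1_X_succPNat (i : ℕ) : D1 (X i.succPNat) = algebraMap ℚ _ (i + 1) := by
  simp [D1, mkDerivation_X]

/-- If `h_0 = 1` and `m·h_m = Σ_{i=1}^m p_i·h_{m-i}` for `m ≥ 1`, then for every `k ≥ 1` and
`m ≥ 0`, `D_1^k(h_m) = Σ_{j=0}^{m-k} C(m-1-j, k-1)·h_j` (empty sum if `k > m`). -/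
theorem stmt5 (H : ℕ → MvPolynomial ℕ+ ℚ) (H0 : H 0 = 1)
    (Hrec : ∀ m : ℕ, 1 ≤ m → (m : ℚ) • H m =
      ∑ i ∈ Finset.range m, X i.succPNat * H (m - (i + 1)))
    (k m : ℕ) (hk : 1 ≤ k) :
    (D1.toLinearMap ^ k) (H m) =
      ∑ j ∈ Finset.range (m + 1 - k), C (((m - 1 - j).choose (k - 1) : ℚ)) * H j := by
  obtain ⟨k, rfl⟩ := Nat.exists_eq_add_of_le' hk
  have hD1 : ∀ m, D1.toLinearMap (H m) = partialSum H m :=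
    D1.apply_eq_partialSum_of_newton D1_X_succPNat H0 Hrec
  rw [Module.End.pow_apply_eq_iterate_partialSum _ H hD1, iterate_partialSum_succ_apply,
    sum_range_choose_smul_eq_sum_range_sub, Nat.add_sub_add_right, Nat.add_sub_cancel]
  simp only [nsmul_eq_mul, map_natCast]
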